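/- Let X = (X_t)_{t≥0} be a càdlàg process adapted to 𝔽. Then X has an arbitrage in the class S(𝔽) of simple predictable integrands of bounded support if and only if there exist bounded 𝔽-stopping times 0 ≤ τ₀ ≤ τ₁ such that either the strategy 1_{(τ₀,τ₁]} or the strategy −1_{(τ₀,τ₁]} is an arbitrage, i.e., either (X_{τ₁} − X_{τ₀} ≥ 0 a.s. and P(X_{τ₁} − X_{τ₀} > 0) > 0) or (X_{τ₀} − X_{τ₁} ≥ 0 a.s. and P(X_{τ₀} − X_{τ₁} > 0) > 0). -/

import Mathlib

open MeasureTheory ProbabilityTheory Filter Set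
open scoped NNReal ENNReal

variable {Ω : Type*} {m0 : MeasurableSpace Ω}

/-- A simple predictable integrand with bounded support for the filtration `ℱ`:
`H = g₀ 1_{{0}} + ∑_{j=1}^{n-1} g_j 1_{(τ_j, τ_{j+1}]}` with `n ≥ 2`,
`0 ≤ τ₁ ≤ ⋯ ≤ τ_n` stopping times, `τ_n` bounded, and `g_j` being `F_{τ_j}`-measurable. -/
structure SimpleStrategy (ℱ : MeasureTheory.Filtration ℝ≥0 m0) where
  n : ℕ
  two_le : 2 ≤ n
  g0 : ℝ
  τ : ℕ → Ω → ℝ≥0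
  g : ℕ → Ω → ℝ
  stopping : ∀ j, 1 ≤ j → j ≤ n → MeasureTheory.IsStoppingTime ℱ (fun ω => (τ j ω : WithTop ℝ≥0))
  mono : ∀ j, 1 ≤ j → j < n → ∀ ω, τ j ω ≤ τ (j + 1) ω
  bounded : ∃ T : ℝ≥0, ∀ ω, τ n ω ≤ T
  g_meas : ∀ j (h1 : 1 ≤ j) (h2 : j < n),
    Measurable[(stopping j h1 h2.le).measurableSpace] (g j)

/-- terminal gain `(H ⬝ X)_∞ = ∑_{j=1}^{n-1} g_j (X_{τ_{j+1}} - X_{τ_j})`. -/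
def SimpleStrategy.gains {ℱ : MeasureTheory.Filtration ℝ≥0 m0}
    (H : SimpleStrategy ℱ) (X : ℝ≥0 → Ω → ℝ) (ω : Ω) : ℝ :=
  ∑ j ∈ Finset.Ico 1 H.n, H.g j ω * (X (H.τ (j + 1) ω) ω - X (H.τ j ω) ω)

/-- membership in `Sʰ(𝔽)` : the jump times are at least `h` apart. -/
def SimpleStrategy.Spaced {ℱ : MeasureTheory.Filtration ℝ≥0 m0}
    (H : SimpleStrategy ℱ) (h : ℝ≥0) : Prop :=
  ∀ j, 1 ≤ j → j < H.n → ∀ ω, H.τ j ω + h ≤ H.τ (j + 1) ω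

/-- `H` is an arbitrage for `X` under `μ`. -/
def IsArbitrage {ℱ : MeasureTheory.Filtration ℝ≥0 m0} (μ : MeasureTheory.Measure Ω)
    (X : ℝ≥0 → Ω → ℝ) (H : SimpleStrategy ℱ) : Prop :=
  (∀ᵐ ω ∂μ, 0 ≤ H.gains X ω) ∧ 0 < μ {ω | 0 < H.gains X ω}

/-- no arbitrage in the class `S(𝔽)` of simple predictable integrands of bounded support. -/
def NoArbitrageSimple (μ : MeasureTheory.Measure Ω) (ℱ : MeasureTheory.Filtration ℝ≥0 m0)
    (X : ℝ≥0 → Ω → ℝ) : Prop :=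
  ¬ ∃ H : SimpleStrategy ℱ, IsArbitrage μ X H

/-- no arbitrage in the Cheridito class `Π(𝔽) = ⋃_{h>0} Sʰ(𝔽)`. -/
def NoArbitrageCC (μ : MeasureTheory.Measure Ω) (ℱ : MeasureTheory.Filtration ℝ≥0 m0)
    (X : ℝ≥0 → Ω → ℝ) : Prop :=
  ¬ ∃ (h : ℝ≥0) (H : SimpleStrategy ℱ), 0 < h ∧ H.Spaced h ∧ IsArbitrage μ X H

/-- `η ∈ L⁰_{+-}` : `η` is neither a nonnegative r.v. that is positive with positive
probability, nor a nonpositive r.v. that is negative with positive probability. -/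
def MemLzeroPM (μ : MeasureTheory.Measure Ω) (η : Ω → ℝ) : Prop :=
  ¬ ((∀ᵐ ω ∂μ, 0 ≤ η ω) ∧ 0 < μ {ω | 0 < η ω}) ∧
  ¬ ((∀ᵐ ω ∂μ, η ω ≤ 0) ∧ 0 < μ {ω | η ω < 0})

/-- all paths are right continuous with left limits. -/
def IsCadlag (X : ℝ≥0 → Ω → ℝ) : Prop :=
  ∀ ω, (∀ t : ℝ≥0, ContinuousWithinAt (fun s => X s ω) (Set.Ici t) t) ∧
    (∀ t : ℝ≥0, 0 < t →
      ∃ l : ℝ, Filter.Tendsto (fun s => X s ω) (nhdsWithin t (Set.Iio t)) (nhds l))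

/-- a standard Brownian motion w.r.t. the filtration `ℱ`. -/
def IsStandardBM (μ : MeasureTheory.Measure Ω) (ℱ : MeasureTheory.Filtration ℝ≥0 m0)
    (B : ℝ≥0 → Ω → ℝ) : Prop :=
  MeasureTheory.Adapted ℱ B ∧ (∀ ω, B 0 ω = 0) ∧ (∀ ω, Continuous fun t => B t ω) ∧
  ∀ s t : ℝ≥0, s < t →
    ProbabilityTheory.Indep
      (MeasurableSpace.comap (fun ω => B t ω - B s ω) (inferInstance : MeasurableSpace ℝ))
      (ℱ s) μ ∧
    MeasureTheory.Measure.map (fun ω => B t ω - B s ω) μ =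
      ProbabilityTheory.gaussianReal 0 (t - s)

/-!
Reduce an arbitrage `H = ∑ g_j 1_{(τ_j, τ_{j+1}]}` to a single step. At the first `k` for which
the partial gain `V_{k+1}` is an arbitrage gain, either `V_k = 0` a.s. and `g_k (X_{τ_{k+1}} - X_{τ_k})`
is already one, or `V_k < 0` with positive probability and that increment restricted to
`{V_k < 0}` is one; right-continuity makes `X` progressive, so this event lies in `F_{τ_k}`.
A one-step arbitrage `ξ (X_σ - X_τ)` with `ξ` `F_τ`-measurable splits by the sign of `ξ`, and for
`B ∈ F_τ` the trade `1_B 1_{(τ, σ]}` is `1_{(τ_B, σ]}` with `τ_B = τ` on `B` and `σ` off `B`.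
-/

open Topology TopologicalSpace

noncomputable def dyadicCeil (n : ℕ) (t : ℝ≥0) : ℝ≥0 := (⌈t * 2 ^ n⌉₊ : ℝ≥0) / 2 ^ n

lemma dyadicCeil_mono (n : ℕ) : Monotone (dyadicCeil n) := fun _ _ hab => by
  unfold dyadicCeil
  gcongr

lemma le_dyadicCeil (n : ℕ) (t : ℝ≥0) : t ≤ dyadicCeil n t := by
  rw [dyadicCeil, le_div_iff₀ (by positivity)]
  exact_mod_cast Nat.le_ceil _

lemma dyadicCeil_le (n : ℕ) (t : ℝ≥0) : dyadicCeil n t ≤ t + (2 ^ n)⁻¹ := by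
  rw [dyadicCeil, div_le_iff₀ (by positivity), add_mul, inv_mul_cancel₀ (by positivity)]
  exact_mod_cast (Nat.ceil_lt_add_one (by positivity)).le

lemma countable_range_dyadicCeil (n : ℕ) : (range (dyadicCeil n)).Countable :=
  (countable_range fun k : ℕ => (k : ℝ≥0) / 2 ^ n).mono <| by
    rintro _ ⟨t, rfl⟩
    exact ⟨_, rfl⟩

lemma tendsto_dyadicCeil (t : ℝ≥0) : Tendsto (fun n => dyadicCeil n t) atTop (𝓝 t) := by
  have h : Tendsto (fun n : ℕ => t + (2 ^ n)⁻¹) atTop (𝓝 t) := by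
    have h2 : Tendsto (fun n : ℕ => ((2 : ℝ≥0) ^ n)⁻¹) atTop (𝓝 0) := by
      simpa only [inv_pow] using
        NNReal.tendsto_pow_atTop_nhds_zero_of_lt_one (inv_lt_one_of_one_lt₀ one_lt_two)
    simpa using tendsto_const_nhds.add h2
  exact tendsto_of_tendsto_of_tendsto_of_le_of_le tendsto_const_nhds h (le_dyadicCeil · t)
    (dyadicCeil_le · t)

lemma measurable_apply_of_countable_range {α β γ : Type*} [MeasurableSpace α] [MeasurableSpace β]
    [MeasurableSingletonClass β] [MeasurableSpace γ] {e : α → β} {g : β → α → γ}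
    (he : Measurable e) (hc : (range e).Countable) (hg : ∀ b ∈ range e, Measurable (g b)) :
    Measurable fun a => g (e a) a := by
  intro s hs
  have : (fun a => g (e a) a) ⁻¹' s = ⋃ b ∈ range e, e ⁻¹' {b} ∩ g b ⁻¹' s := by
    ext a
    simp only [mem_preimage, mem_iUnion, mem_inter_iff, mem_singleton_iff]
    exact ⟨fun h => ⟨_, ⟨a, rfl⟩, rfl, h⟩, fun ⟨_, _, hb, h⟩ => hb ▸ h⟩
  rw [this]
  exact .biUnion hc fun b hb => (he (measurableSet_singleton b)).inter (hg b hb hs)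

lemma MeasureTheory.Adapted.isStronglyProgressive_of_rightContinuous {β : Type*}
    [TopologicalSpace β] [PseudoMetrizableSpace β] [SecondCountableTopology β] [MeasurableSpace β]
    [BorelSpace β] {ℱ : Filtration ℝ≥0 m0} {X : ℝ≥0 → Ω → β} (hX : Adapted ℱ X)
    (hrc : ∀ ω t, ContinuousWithinAt (fun s => X s ω) (Ici t) t) :
    IsStronglyProgressive ℱ X := by
  intro i
  let : MeasurableSpace (Iic i × Ω) := Subtype.instMeasurableSpace.prod (ℱ i)
  -- Approximate from the right, as right-continuity requires; the cap at `i` keeps the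
  -- approximants `ℱ i`-measurable.
  refine Measurable.stronglyMeasurable (measurable_of_tendsto_metrizable
    (f := fun n (p : Iic i × Ω) => X (min i (dyadicCeil n p.1)) p.2) (fun n => ?_) ?_)
  · refine measurable_apply_of_countable_range (g := fun t (p : Iic i × Ω) => X t p.2) ?_ ?_ ?_
    · exact measurable_const.min
        ((dyadicCeil_mono n).measurable.comp (measurable_subtype_coe.comp measurable_fst))
    · refine ((countable_range_dyadicCeil n).image (min i)).mono ?_
      rintro _ ⟨p, rfl⟩
      exact ⟨_, ⟨p.1, rfl⟩, rfl⟩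
    · rintro _ ⟨p, rfl⟩
      exact ((hX _).mono (ℱ.mono (min_le_left _ _)) le_rfl).comp measurable_snd
  · rw [tendsto_pi_nhds]
    intro p
    refine (hrc p.2 p.1).tendsto.comp (tendsto_nhdsWithin_iff.2 ⟨?_, .of_forall fun n => ?_⟩)
    · simpa [min_eq_right (mem_Iic.1 p.1.2)] using
        (tendsto_const_nhds (x := i)).min (tendsto_dyadicCeil p.1)
    · exact le_min p.1.2 (le_dyadicCeil n p.1)

lemma MeasureTheory.IsStoppingTime.piecewise_of_measurableSet {ι : Type*} [Preorder ι]
    {ℱ : Filtration ι m0} {τ σ : Ω → WithTop ι} {s : Set Ω} [DecidablePred (· ∈ s)]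
    (hτ : IsStoppingTime ℱ τ) (hσ : IsStoppingTime ℱ σ) (hle : τ ≤ σ)
    (hs : MeasurableSet[hτ.measurableSpace] s) : IsStoppingTime ℱ (s.piecewise τ σ) := by
  intro t
  have hsc : MeasurableSet[hσ.measurableSpace] sᶜ := hτ.measurableSpace_mono hσ hle _ hs.compl
  have : {ω | s.piecewise τ σ ω ≤ t} = s ∩ {ω | τ ω ≤ t} ∪ sᶜ ∩ {ω | σ ω ≤ t} := by
    ext ω
    by_cases hω : ω ∈ s <;> simp [hω]
  rw [this]
  exact (hs.2 t).union (hsc.2 t)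

def IsArbitrageGain (μ : Measure Ω) (f : Ω → ℝ) : Prop :=
  (∀ᵐ ω ∂μ, 0 ≤ f ω) ∧ 0 < μ {ω | 0 < f ω}

namespace IsArbitrageGain

variable {μ : Measure Ω} {f g : Ω → ℝ}

lemma congr_ae (hf : IsArbitrageGain μ f) (hfg : f =ᵐ[μ] g) : IsArbitrageGain μ g :=
  ⟨by filter_upwards [hf.1, hfg] with ω hω hfg using hfg ▸ hω,
    hf.2.trans_le <| measure_mono_ae <| hfg.mono fun ω hfg hω => (hfg ▸ hω : 0 < g ω)⟩

lemma indicator_pos_or_indicator_neg {ξ : Ω → ℝ}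
    (h : IsArbitrageGain μ fun ω => ξ ω * f ω) :
    IsArbitrageGain μ ({ω | 0 < ξ ω}.indicator f) ∨
      IsArbitrageGain μ ({ω | ξ ω < 0}.indicator (-f)) := by
  have hsub : {ω | 0 < ξ ω * f ω} ⊆
      {ω | 0 < {ω | 0 < ξ ω}.indicator f ω} ∪ {ω | 0 < {ω | ξ ω < 0}.indicator (-f) ω} := by
    intro ω (hω : 0 < ξ ω * f ω)
    rcases lt_trichotomy (ξ ω) 0 with hξ | hξ | hξ
    · right
      simpa [hξ] using neg_of_mul_pos_right hω hξ.le
    · simp [hξ] at hω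
    · left
      simpa [hξ] using pos_of_mul_pos_right hω hξ.le
  have hpos := h.2.trans_le (measure_mono hsub)
  rw [pos_iff_ne_zero, Ne, measure_union_null_iff, not_and_or, ← Ne, ← Ne,
    ← pos_iff_ne_zero, ← pos_iff_ne_zero] at hpos
  refine hpos.imp (fun hpos => ⟨?_, hpos⟩) (fun hpos => ⟨?_, hpos⟩) <;>
    filter_upwards [h.1] with ω hω
  · by_cases hξ : 0 < ξ ω
    · simpa [hξ] using nonneg_of_mul_nonneg_right hω hξ
    · simp [hξ]
  · by_cases hξ : ξ ω < 0
    · simpa [hξ] using nonpos_of_mul_nonneg_right hω hξ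
    · simp [hξ]

lemma or_indicator_of_add (h : IsArbitrageGain μ (f + g)) (hf : ¬ IsArbitrageGain μ f) :
    IsArbitrageGain μ g ∨ IsArbitrageGain μ ({ω | f ω < 0}.indicator g) := by
  by_cases hneg : μ {ω | f ω < 0} = 0
  · left
    have hf_nonneg : ∀ᵐ ω ∂μ, 0 ≤ f ω := ae_iff.2 (by simpa only [not_le] using hneg)
    have hf_nonpos : ∀ᵐ ω ∂μ, f ω ≤ 0 := by
      refine ae_iff.2 (by_contra fun hpos => hf ⟨hf_nonneg, ?_⟩)
      simpa only [not_le, pos_iff_ne_zero] using hpos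
    refine h.congr_ae ?_
    filter_upwards [hf_nonneg, hf_nonpos] with ω h₁ h₂
    simp [le_antisymm h₂ h₁]
  · right
    have hae : ∀ᵐ ω ∂μ, f ω < 0 → 0 < g ω := h.1.mono fun ω hω hfω => by
      simp only [Pi.add_apply] at hω
      linarith
    refine ⟨?_, (pos_iff_ne_zero.2 hneg).trans_le (measure_mono_ae ?_)⟩
    · filter_upwards [hae] with ω hω
      by_cases hfω : f ω < 0
      · simpa [hfω] using (hω hfω).le
      · simp [hfω]
    · filter_upwards [hae] with ω hω (hfω : f ω < 0)
      show 0 < _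
      simpa [hfω] using hω hfω

end IsArbitrageGain

section OneStep

variable {ℱ : Filtration ℝ≥0 m0} {X : ℝ≥0 → Ω → ℝ} {τ σ : Ω → ℝ≥0}

lemma exists_isStoppingTime_sub_eq_indicator
    (hτ : IsStoppingTime ℱ fun ω => (τ ω : WithTop ℝ≥0))
    (hσ : IsStoppingTime ℱ fun ω => (σ ω : WithTop ℝ≥0)) (hle : τ ≤ σ) {s : Set Ω}
    (hs : MeasurableSet[hτ.measurableSpace] s) :
    ∃ ρ : Ω → ℝ≥0, IsStoppingTime ℱ (fun ω => (ρ ω : WithTop ℝ≥0)) ∧ ρ ≤ σ ∧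
      (fun ω => X (σ ω) ω - X (ρ ω) ω) = s.indicator fun ω => X (σ ω) ω - X (τ ω) ω := by
  classical
  refine ⟨s.piecewise τ σ, ?_, fun ω => ?_, funext fun ω => ?_⟩
  · convert hτ.piecewise_of_measurableSet hσ (fun ω => WithTop.coe_le_coe.2 (hle ω)) hs using 1
    exact funext fun ω => apply_piecewise _ _ _ (fun _ (t : ℝ≥0) => (t : WithTop ℝ≥0))
  · by_cases hω : ω ∈ s <;> simp [hω, hle ω]
  · by_cases hω : ω ∈ s <;> simp [hω]

lemma exists_isStoppingTime_isArbitrageGain_of_mul {μ : Measure Ω}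
    (hτ : IsStoppingTime ℱ fun ω => (τ ω : WithTop ℝ≥0))
    (hσ : IsStoppingTime ℱ fun ω => (σ ω : WithTop ℝ≥0)) (hle : τ ≤ σ) {ξ : Ω → ℝ}
    (hξ : Measurable[hτ.measurableSpace] ξ)
    (h : IsArbitrageGain μ fun ω => ξ ω * (X (σ ω) ω - X (τ ω) ω)) :
    ∃ ρ : Ω → ℝ≥0, IsStoppingTime ℱ (fun ω => (ρ ω : WithTop ℝ≥0)) ∧ ρ ≤ σ ∧
      (IsArbitrageGain μ (fun ω => X (σ ω) ω - X (ρ ω) ω) ∨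
        IsArbitrageGain μ (fun ω => X (ρ ω) ω - X (σ ω) ω)) := by
  rcases h.indicator_pos_or_indicator_neg with h | h
  · obtain ⟨ρ, hρ, hρσ, hρX⟩ :=
      exists_isStoppingTime_sub_eq_indicator (X := X) (s := {ω | 0 < ξ ω}) hτ hσ hle
        (hξ measurableSet_Ioi)
    exact ⟨ρ, hρ, hρσ, .inl (hρX ▸ h)⟩
  · obtain ⟨ρ, hρ, hρσ, hρX⟩ :=
      exists_isStoppingTime_sub_eq_indicator (X := X) (s := {ω | ξ ω < 0}) hτ hσ hle
        (hξ measurableSet_Iio)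
    refine ⟨ρ, hρ, hρσ, .inr ?_⟩
    have : (fun ω => X (ρ ω) ω - X (σ ω) ω) =
        {ω | ξ ω < 0}.indicator (-fun ω => X (σ ω) ω - X (τ ω) ω) := by
      rw [indicator_neg', ← hρX]
      funext ω
      simp
    exact this ▸ h

end OneStep

lemma Nat.exists_not_and_succ_of_not_of_le {p : ℕ → Prop} {a b : ℕ} (ha : ¬ p a) (hb : p b)
    (hab : a ≤ b) : ∃ k, a ≤ k ∧ k < b ∧ ¬ p k ∧ p (k + 1) := by
  induction b, hab using Nat.le_induction with
  | base => exact absurd hb ha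
  | succ b hab ih =>
    by_cases hpb : p b
    · obtain ⟨k, hak, hkb, hk⟩ := ih hpb
      exact ⟨k, hak, hkb.trans b.lt_succ_self, hk⟩
    · exact ⟨b, hab, b.lt_succ_self, hpb, hb⟩

namespace SimpleStrategy

variable {ℱ : Filtration ℝ≥0 m0} (H : SimpleStrategy ℱ) (X : ℝ≥0 → Ω → ℝ)

def partialGains (k : ℕ) (ω : Ω) : ℝ :=
  ∑ j ∈ Finset.Ico 1 k, H.g j ω * (X (H.τ (j + 1) ω) ω - X (H.τ j ω) ω)

lemma partialGains_one : H.partialGains X 1 = 0 := by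
  funext ω
  simp [partialGains]

lemma partialGains_succ {k : ℕ} (hk : 1 ≤ k) :
    H.partialGains X (k + 1) =
      H.partialGains X k + fun ω => H.g k ω * (X (H.τ (k + 1) ω) ω - X (H.τ k ω) ω) := by
  funext ω
  simp [partialGains, Finset.sum_Ico_succ_top hk]

variable {H X}

lemma τ_mono {i j : ℕ} (hi : 1 ≤ i) (hij : i ≤ j) (hj : j ≤ H.n) : H.τ i ≤ H.τ j := by
  induction j, hij using Nat.le_induction with
  | base => exact le_rfl
  | succ j hij ih => exact (ih (by omega)).trans (H.mono j (by omega) (by omega))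

lemma measurableSpace_mono {i j : ℕ} (hi : 1 ≤ i) (hij : i ≤ j) (hj : j ≤ H.n) :
    (H.stopping i hi (hij.trans hj)).measurableSpace ≤
      (H.stopping j (hi.trans hij) hj).measurableSpace :=
  IsStoppingTime.measurableSpace_mono _ _ fun ω => WithTop.coe_le_coe.2 (H.τ_mono hi hij hj ω)

lemma measurable_partialGains (hX : IsStronglyProgressive ℱ X) {k : ℕ} (hk₁ : 1 ≤ k)
    (hk : k ≤ H.n) : Measurable[(H.stopping k hk₁ hk).measurableSpace] (H.partialGains X k) := by
  refine Finset.measurable_sum _ fun j hj => ?_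
  obtain ⟨hj₁, hjk⟩ := Finset.mem_Ico.1 hj
  have hg := (H.g_meas j hj₁ (by omega)).mono (H.measurableSpace_mono hj₁ hjk.le hk) le_rfl
  have hXj := (measurable_stoppedValue hX (H.stopping j hj₁ (by omega))).mono
    (H.measurableSpace_mono hj₁ hjk.le hk) le_rfl
  have hXj' := (measurable_stoppedValue hX (H.stopping (j + 1) (by omega) (by omega))).mono
    (H.measurableSpace_mono (by omega) hjk hk) le_rfl
  exact hg.mul (hXj'.sub hXj)

lemma exists_isArbitrageGain_mul_increment (hX : IsStronglyProgressive ℱ X) {μ : Measure Ω}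
    (hH : IsArbitrage μ X H) :
    ∃ (k : ℕ) (hk₁ : 1 ≤ k) (hk : k < H.n) (ξ : Ω → ℝ),
      Measurable[(H.stopping k hk₁ hk.le).measurableSpace] ξ ∧
        IsArbitrageGain μ fun ω => ξ ω * (X (H.τ (k + 1) ω) ω - X (H.τ k ω) ω) := by
  classical
  obtain ⟨k, hk₁, hk, hnot, harb⟩ := Nat.exists_not_and_succ_of_not_of_le
    (p := fun k => IsArbitrageGain μ (H.partialGains X k)) (a := 1) (b := H.n)
    (by simp [partialGains_one, IsArbitrageGain]) hH (by linarith [H.two_le])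
  rw [H.partialGains_succ X hk₁] at harb
  refine ⟨k, hk₁, hk, ?_⟩
  rcases harb.or_indicator_of_add hnot with h | h
  · exact ⟨H.g k, H.g_meas k hk₁ hk, h⟩
  · refine ⟨{ω | H.partialGains X k ω < 0}.indicator (H.g k), (H.g_meas k hk₁ hk).indicator
      (H.measurable_partialGains hX hk₁ hk.le measurableSet_Iio), ?_⟩
    convert h using 1
    exact funext fun ω =>
      (indicator_mul_left _ _ fun ω => X (H.τ (k + 1) ω) ω - X (H.τ k ω) ω).symm

/-- The strategy `c 1_{(τ₀, τ₁]}`. -/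
def ofInterval (c : ℝ) {τ₀ τ₁ : Ω → ℝ≥0} (h₀ : IsStoppingTime ℱ fun ω => (τ₀ ω : WithTop ℝ≥0))
    (h₁ : IsStoppingTime ℱ fun ω => (τ₁ ω : WithTop ℝ≥0)) (hle : τ₀ ≤ τ₁)
    (hbdd : ∃ T : ℝ≥0, ∀ ω, τ₁ ω ≤ T) : SimpleStrategy ℱ where
  n := 2
  two_le := le_rfl
  g0 := 0
  τ j := if j ≤ 1 then τ₀ else τ₁
  g _ _ := c
  stopping j _ _ := by interval_cases j <;> simpa
  mono j _ _ := by interval_cases j; simpa using fun ω => hle ω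
  bounded := by simpa using hbdd
  g_meas _ _ _ := measurable_const

lemma gains_ofInterval (c : ℝ) {τ₀ τ₁ : Ω → ℝ≥0}
    (h₀ : IsStoppingTime ℱ fun ω => (τ₀ ω : WithTop ℝ≥0))
    (h₁ : IsStoppingTime ℱ fun ω => (τ₁ ω : WithTop ℝ≥0)) (hle : τ₀ ≤ τ₁)
    (hbdd : ∃ T : ℝ≥0, ∀ ω, τ₁ ω ≤ T) :
    (ofInterval c h₀ h₁ hle hbdd).gains X = fun ω => c * (X (τ₁ ω) ω - X (τ₀ ω) ω) := by
  funext ω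
  simp [gains, ofInterval]

end SimpleStrategy

theorem stmt11_general (μ : MeasureTheory.Measure Ω)
    (ℱ : MeasureTheory.Filtration ℝ≥0 m0)
    (X : ℝ≥0 → Ω → ℝ) (hadapted : MeasureTheory.Adapted ℱ X) (hcadlag : IsCadlag X) :
    (∃ H : SimpleStrategy ℱ, IsArbitrage μ X H) ↔
      ∃ τ0 τ1 : Ω → ℝ≥0,
        MeasureTheory.IsStoppingTime ℱ (fun ω => (τ0 ω : WithTop ℝ≥0)) ∧
          MeasureTheory.IsStoppingTime ℱ (fun ω => (τ1 ω : WithTop ℝ≥0)) ∧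
        (∃ T : ℝ≥0, ∀ ω, τ0 ω ≤ T) ∧ (∃ T : ℝ≥0, ∀ ω, τ1 ω ≤ T) ∧
        (∀ ω, τ0 ω ≤ τ1 ω) ∧
        (((∀ᵐ ω ∂μ, 0 ≤ X (τ1 ω) ω - X (τ0 ω) ω) ∧
            0 < μ {ω | 0 < X (τ1 ω) ω - X (τ0 ω) ω}) ∨
          ((∀ᵐ ω ∂μ, 0 ≤ X (τ0 ω) ω - X (τ1 ω) ω) ∧
            0 < μ {ω | 0 < X (τ0 ω) ω - X (τ1 ω) ω})) := by
  constructor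
  · rintro ⟨H, hH⟩
    have hX := hadapted.isStronglyProgressive_of_rightContinuous fun ω => (hcadlag ω).1
    obtain ⟨k, hk₁, hk, ξ, hξ, hgain⟩ := H.exists_isArbitrageGain_mul_increment hX hH
    obtain ⟨ρ, hρ, hρσ, hρgain⟩ := exists_isStoppingTime_isArbitrageGain_of_mul
      (H.stopping k hk₁ hk.le) (H.stopping (k + 1) (by omega) hk) (H.mono k hk₁ hk) hξ hgain
    obtain ⟨T, hT⟩ := H.bounded
    have hσT : ∀ ω, H.τ (k + 1) ω ≤ T := fun ω => (H.τ_mono (by omega) hk le_rfl ω).trans (hT ω)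
    exact ⟨ρ, H.τ (k + 1), hρ, H.stopping (k + 1) (by omega) hk,
      ⟨T, fun ω => (hρσ ω).trans (hσT ω)⟩, ⟨T, hσT⟩, hρσ, hρgain⟩
  · rintro ⟨τ₀, τ₁, h₀, h₁, -, hbdd, hle, hgain | hgain⟩
    · refine ⟨.ofInterval 1 h₀ h₁ hle hbdd, ?_⟩
      simpa only [IsArbitrage, SimpleStrategy.gains_ofInterval, one_mul] using hgain
    · refine ⟨.ofInterval (-1) h₀ h₁ hle hbdd, ?_⟩
      simpa only [IsArbitrage, SimpleStrategy.gains_ofInterval, neg_one_mul, neg_sub] using hgain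

/-- **Corollary 6.** A càdlàg adapted process `X` has an arbitrage in `S(𝔽)` iff there
are bounded stopping times `τ₀ ≤ τ₁` such that `1_{(τ₀,τ₁]}` or `-1_{(τ₀,τ₁]}` is an
arbitrage. -/
theorem stmt11 (μ : MeasureTheory.Measure Ω) [MeasureTheory.IsProbabilityMeasure μ]
    (ℱ : MeasureTheory.Filtration ℝ≥0 m0)
    (X : ℝ≥0 → Ω → ℝ) (hadapted : MeasureTheory.Adapted ℱ X) (hcadlag : IsCadlag X) :
    (∃ H : SimpleStrategy ℱ, IsArbitrage μ X H) ↔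
      ∃ τ0 τ1 : Ω → ℝ≥0,
        MeasureTheory.IsStoppingTime ℱ (fun ω => (τ0 ω : WithTop ℝ≥0)) ∧
          MeasureTheory.IsStoppingTime ℱ (fun ω => (τ1 ω : WithTop ℝ≥0)) ∧
        (∃ T : ℝ≥0, ∀ ω, τ0 ω ≤ T) ∧ (∃ T : ℝ≥0, ∀ ω, τ1 ω ≤ T) ∧
        (∀ ω, τ0 ω ≤ τ1 ω) ∧
        (((∀ᵐ ω ∂μ, 0 ≤ X (τ1 ω) ω - X (τ0 ω) ω) ∧
            0 < μ {ω | 0 < X (τ1 ω) ω - X (τ0 ω) ω}) ∨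
          ((∀ᵐ ω ∂μ, 0 ≤ X (τ0 ω) ω - X (τ1 ω) ω) ∧
            0 < μ {ω | 0 < X (τ0 ω) ω - X (τ1 ω) ω})) :=
  stmt11_general μ ℱ X hadapted hcadlag
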